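/- arXiv:1310.8408 — 7 statements merged into one kernel-verified Lean document; each statement's English description precedes it below -/
import Mathlib

section
/- For every LTS L, the unambiguation Una(L) := L || Det(L) is bisimilar to L. -/
/-- A labelled transition system with state type `S` and visible-action type `A`.
`none` plays the role of the invisible action τ. -/
structure LTS (S : Type*) (A : Type*) where
  alpha : Set A
  init : S
  tr : S → Option A → S → Prop
  wf : ∀ s a s', tr s (some a) s' → a ∈ alpha

namespace LTS

variable {S S₁ S₂ S₃ A : Type*}

/-- `Steps L s σ t`: a finite path from `s` to `t` whose visible labels spell `σ`,
with τ-transitions interleaved freely (this is `s ⇒^σ t`). -/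
inductive Steps (L : LTS S A) : S → List A → S → Prop
  | refl (s : S) : Steps L s [] s
  | tau {s s' t : S} {σ : List A} : L.tr s none s' → Steps L s' σ t → Steps L s σ t
  | vis {s s' t : S} {a : A} {σ : List A} :
      L.tr s (some a) s' → Steps L s' σ t → Steps L s (a :: σ) t

/-- Traces. -/
def Tr (L : LTS S A) : Set (List A) := { σ | ∃ s, L.Steps L.init σ s }

/-- A state admits an infinite path consisting solely of τ-transitions. -/
def DivergesFrom (L : LTS S A) (s : S) : Prop :=
  ∃ f : ℕ → S, f 0 = s ∧ ∀ n, L.tr (f n) none (f (n + 1))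

/-- Divergence traces. -/
def Div (L : LTS S A) : Set (List A) :=
  { σ | ∃ s, L.Steps L.init σ s ∧ L.DivergesFrom s }

/-- `s` refuses every action in `X ∪ {τ}`. -/
def Refuses (L : LTS S A) (s : S) (X : Set A) : Prop :=
  (∀ s', ¬ L.tr s none s') ∧ ∀ a ∈ X, ∀ s', ¬ L.tr s (some a) s'

/-- Stable failures. -/
def Sf (L : LTS S A) : Set (List A × Set A) :=
  { p | ∃ s, L.Steps L.init p.1 s ∧ L.Refuses s p.2 }

/-- Traces of stable failures: `Sf^Tr(L) = { σ | (σ, ∅) ∈ Sf(L) }`. -/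
def SfTr (L : LTS S A) : Set (List A) := { σ | (σ, (∅ : Set A)) ∈ L.Sf }

/-- The length-`n` prefix of an infinite word. -/
def pref (ξ : ℕ → A) (n : ℕ) : List A := (List.range n).map ξ

/-- Infinite traces: infinite paths from the initial state spelling `ξ`. -/
def Inf (L : LTS S A) : Set (ℕ → A) :=
  { ξ | ∃ g : ℕ → S, g 0 = L.init ∧ ∀ n, L.Steps (g n) [ξ n] (g (n + 1)) }

/-- Bisimilarity `L₁ ≡ L₂`: equal alphabets and a bisimulation relating the
initial states. -/
def Bisimilar (L₁ : LTS S₁ A) (L₂ : LTS S₂ A) : Prop :=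
  L₁.alpha = L₂.alpha ∧
  ∃ R : S₁ → S₂ → Prop, R L₁.init L₂.init ∧
    ∀ s₁ s₂, R s₁ s₂ →
      (∀ a s₁', L₁.tr s₁ a s₁' → ∃ s₂', L₂.tr s₂ a s₂' ∧ R s₁' s₂') ∧
      (∀ a s₂', L₂.tr s₂ a s₂' → ∃ s₁', L₁.tr s₁ a s₁' ∧ R s₁' s₂')

/-- Parallel composition: synchronization on common visible actions,
interleaving on τ and on actions of only one alphabet. -/
def par (L₁ : LTS S₁ A) (L₂ : LTS S₂ A) : LTS (S₁ × S₂) A where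
  alpha := L₁.alpha ∪ L₂.alpha
  init := (L₁.init, L₂.init)
  tr := fun p a q =>
    match a with
    | none => (L₁.tr p.1 none q.1 ∧ q.2 = p.2) ∨ (L₂.tr p.2 none q.2 ∧ q.1 = p.1)
    | some b =>
        (b ∉ L₂.alpha ∧ L₁.tr p.1 (some b) q.1 ∧ q.2 = p.2) ∨
        (b ∉ L₁.alpha ∧ L₂.tr p.2 (some b) q.2 ∧ q.1 = p.1) ∨
        (b ∈ L₁.alpha ∧ b ∈ L₂.alpha ∧ L₁.tr p.1 (some b) q.1 ∧ L₂.tr p.2 (some b) q.2)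
  wf := by
    rintro s b s' (⟨-, h, -⟩ | ⟨-, h, -⟩ | ⟨h₁, h₂, -, -⟩)
    · exact Set.mem_union_left _ (L₁.wf _ _ _ h)
    · exact Set.mem_union_right _ (L₂.wf _ _ _ h)
    · exact Set.mem_union_left _ h₁

theorem mem_alpha_of_steps {L : LTS S A} {s t : S} {σ : List A}
    (h : L.Steps s σ t) : ∀ a ∈ σ, a ∈ L.alpha := by
  induction h with
  | refl => simp
  | tau _ _ ih => exact ih
  | vis htr _ ih =>
      intro a ha
      rcases List.mem_cons.mp ha with rfl | ha
      · exact L.wf _ _ _ htr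
      · exact ih a ha

/-- `S_σ`: the set of states reachable from the initial state via `σ`. -/
def Sset (L : LTS S A) (σ : List A) : Set S := { s | L.Steps L.init σ s }

/-- Determinization `Det(L)`, with states `S_σ`, transitions
`(S_σ, a, S_{σa})` for `σa ∈ Tr(L)`, and initial state `S_ε`. -/
def Det (L : LTS S A) : LTS (Set S) A where
  alpha := L.alpha
  init := L.Sset []
  tr := fun X b Y =>
    ∃ a σ, b = some a ∧ σ ++ [a] ∈ L.Tr ∧ X = L.Sset σ ∧ Y = L.Sset (σ ++ [a])
  wf := by
    rintro X b Y ⟨a, σ, hb, ⟨t, hsteps⟩, -, -⟩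
    obtain rfl : b = a := Option.some.inj hb
    exact mem_alpha_of_steps hsteps b (by simp)

/-- Unambiguation `Una(L) = L || Det(L)`. -/
def Una (L : LTS S A) : LTS (S × Set S) A := L.par L.Det

/-- Minimal divergence traces. -/
def minD (L : LTS S A) : Set (List A) :=
  { σ ∈ L.Div | ∀ i < σ.length, σ.take i ∉ L.Div }

/-- Finite extensions of minimal divergence traces (within `Σ(L)*`). -/
def extT (L : LTS S A) : Set (List A) :=
  { σ | (∀ a ∈ σ, a ∈ L.alpha) ∧ ∃ i ≤ σ.length, σ.take i ∈ L.minD }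

/-- Always-nondivergent traces. -/
def anT (L : LTS S A) : Set (List A) := L.Tr \ L.extT

/-- Infinite extensions of minimal divergence traces (within `Σ(L)^ω`). -/
def extI (L : LTS S A) : Set (ℕ → A) :=
  { ξ | (∀ i, ξ i ∈ L.alpha) ∧ ∃ i, pref ξ i ∈ L.minD }

/-- Always-nondivergent infinite traces. -/
def anI (L : LTS S A) : Set (ℕ → A) := L.Inf \ L.extI

/-- Eventually-always-nondivergent infinite traces. -/
def eanI (L : LTS S A) : Set (ℕ → A) :=
  { ξ ∈ L.Inf | ∃ n, ∀ i ≥ n, pref ξ i ∉ L.Div }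

/-- Always-eventually-nondivergent infinite traces. -/
def aenI (L : LTS S A) : Set (ℕ → A) :=
  { ξ ∈ L.Inf | ∀ n, ∃ i ≥ n, pref ξ i ∉ L.Div }

/-- Nondivergent failures. -/
def nF (L : LTS S A) : Set (List A × Set A) := { p ∈ L.Sf | p.1 ∉ L.Div }

/-- Strongly nondivergent failures. -/
def snF (L : LTS S A) : Set (List A × Set A) :=
  { p ∈ L.nF | ∀ a ∈ p.2, p.1 ++ [a] ∉ L.Div }

/-- Always nondivergent failures. -/
def anF (L : LTS S A) : Set (List A × Set A) := { p ∈ L.Sf | p.1 ∉ L.extT }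

/-- Strongly always nondivergent failures. -/
def sanF (L : LTS S A) : Set (List A × Set A) :=
  { p ∈ L.anF | ∀ a ∈ p.2, p.1 ++ [a] ∉ L.minD }

/-- `X^Tr = { σ | (σ, ∅) ∈ X }`. -/
def XTr (X : Set (List A × Set A)) : Set (List A) := { σ | (σ, (∅ : Set A)) ∈ X }

/-- Internal choice `L₁ ⊓ L₂`: a fresh initial state with a τ-transition to
(a disjoint copy of) each of `L₁` and `L₂`. -/
def ichoice (L₁ : LTS S₁ A) (L₂ : LTS S₂ A) : LTS (Option (S₁ ⊕ S₂)) A where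
  alpha := L₁.alpha ∪ L₂.alpha
  init := none
  tr := fun s a t =>
    (s = none ∧ a = none ∧
      (t = some (Sum.inl L₁.init) ∨ t = some (Sum.inr L₂.init))) ∨
    (∃ s₁ t₁, s = some (Sum.inl s₁) ∧ t = some (Sum.inl t₁) ∧ L₁.tr s₁ a t₁) ∨
    (∃ s₂ t₂, s = some (Sum.inr s₂) ∧ t = some (Sum.inr t₂) ∧ L₂.tr s₂ a t₂)
  wf := by
    rintro s a t (⟨-, h, -⟩ | ⟨s₁, t₁, -, -, h⟩ | ⟨s₂, t₂, -, -, h⟩)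
    · simp at h
    · exact Set.mem_union_left _ (L₁.wf _ _ _ h)
    · exact Set.mem_union_right _ (L₂.wf _ _ _ h)

/-- The livelock LTS `LL`: one state, empty alphabet, a single τ-loop. -/
def LL (A : Type*) : LTS Unit A where
  alpha := ∅
  init := ()
  tr := fun _ a _ => a = none
  wf := by rintro _ _ _ h; simp at h

/-- Reachability from the initial state. -/
def Reachable (L : LTS S A) (s : S) : Prop := ∃ σ, L.Steps L.init σ s

/-- The reachable part of an LTS. -/
def reachPart (L : LTS S A) : LTS {s : S // L.Reachable s} A where
  alpha := L.alpha
  init := ⟨L.init, ⟨[], Steps.refl _⟩⟩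
  tr := fun s a t => L.tr s.1 a t.1
  wf := fun _ a _ h => L.wf _ _ _ h

/-- `σ_a`: extend a trace by a label (`τ` contributes nothing). -/
def extw (σ : List A) (a : Option A) : List A :=
  match a with
  | none => σ
  | some b => σ ++ [b]

open scoped Classical in
/-- `[σ] = pre` (i.e. `true`) iff `σ ∈ anT(L)`. -/
noncomputable def tag (L : LTS S A) (σ : List A) : Bool := decide (σ ∈ L.anT)

/-- `PD(L)`: `Una(L)` augmented with a bit remembering whether the executed
trace is still always-nondivergent (`true` = pre-divergent). -/
noncomputable def PD (L : LTS S A) : LTS ((S × Set S) × Bool) A where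
  alpha := L.alpha
  init := (L.Una.init, L.tag [])
  tr := fun p a q =>
    ∃ σ, L.Una.Steps L.Una.init σ p.1 ∧ p.2 = L.tag σ ∧
      q.2 = L.tag (extw σ a) ∧ L.Una.tr p.1 a q.1
  wf := by
    rintro p a q ⟨σ, -, -, -, h⟩
    have h' := L.Una.wf _ _ _ h
    rcases h' with h' | h' <;> exact h'

theorem steps_append {L : LTS S A} {s t u : S} {σ ρ : List A}
    (h₁ : L.Steps s σ t) (h₂ : L.Steps t ρ u) : L.Steps s (σ ++ ρ) u := by
  induction h₁ with
  | refl => simpa using h₂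
  | tau htr _ ih => exact .tau htr (ih h₂)
  | vis htr _ ih => exact .vis htr (ih h₂)

theorem steps_split {L : LTS S A} {s u : S} {μ : List A} (h : L.Steps s μ u) :
    ∀ σ ρ, μ = σ ++ ρ → ∃ t, L.Steps s σ t ∧ L.Steps t ρ u := by
  induction h with
  | refl s =>
      intro σ ρ h
      obtain ⟨rfl, rfl⟩ := List.append_eq_nil_iff.mp h.symm
      exact ⟨s, .refl s, .refl s⟩
  | tau htr _ ih =>
      intro σ ρ h
      obtain ⟨t, h1, h2⟩ := ih σ ρ h
      exact ⟨t, .tau htr h1, h2⟩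
  | vis htr hst ih =>
      intro σ ρ h
      cases σ with
      | nil =>
          refine ⟨_, .refl _, ?_⟩
          simp only [List.nil_append] at h
          subst h
          exact .vis htr hst
      | cons b σ' =>
          simp only [List.cons_append, List.cons.injEq] at h
          obtain ⟨rfl, h⟩ := h
          obtain ⟨t, h1, h2⟩ := ih σ' ρ h
          exact ⟨t, .vis htr h1, h2⟩

theorem Sset_snoc_congr {L : LTS S A} {σ σ' : List A} (h : L.Sset σ = L.Sset σ')
    (b : A) : L.Sset (σ ++ [b]) = L.Sset (σ' ++ [b]) := by
  have key : ∀ μ ν : List A, L.Sset μ = L.Sset ν →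
      L.Sset (μ ++ [b]) ⊆ L.Sset (ν ++ [b]) := by
    intro μ ν hμν t ht
    obtain ⟨u, h1, h2⟩ := steps_split ht μ [b] rfl
    have : u ∈ L.Sset ν := hμν ▸ h1
    exact steps_append this h2
  exact Set.Subset.antisymm (key _ _ h) (key _ _ h.symm)

/-- the unambiguation `Una(L) = L || Det(L)` is bisimilar to `L`. -/
theorem una_bisimilar (L : LTS S A) : Bisimilar L.Una L := by
  constructor
  · show L.alpha ∪ L.alpha = L.alpha
    exact Set.union_self _
  · refine ⟨fun p s => p.1 = s ∧ ∃ σ, L.Steps L.init σ s ∧ p.2 = L.Sset σ,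
      ⟨rfl, [], .refl _, rfl⟩, ?_⟩
    rintro ⟨s, X⟩ s₂ ⟨rfl, σ, hsteps, rfl⟩
    dsimp only at *
    constructor
    · -- Una simulates into L
      rintro a ⟨s', X'⟩ htr
      match a with
      | none =>
          rcases htr with ⟨h, hX⟩ | ⟨⟨a', σ', hcon, -⟩, -⟩
          · exact ⟨s', h, rfl, σ, by simpa using steps_append hsteps (.tau h (.refl _)), hX⟩
          · exact absurd hcon (by simp)
      | some b =>
          rcases htr with ⟨hb, hL, -⟩ | ⟨hb, hdet, -⟩ | ⟨-, -, hL, hdet⟩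
          · exact absurd (L.wf _ _ _ hL) hb
          · obtain ⟨a', σ', heq, ⟨t, hst⟩, -, -⟩ := hdet
            obtain rfl := Option.some.inj heq
            exact absurd (mem_alpha_of_steps hst b (by simp)) hb
          · obtain ⟨a', σ', heq, hmem, hXσ', hX'⟩ := hdet
            obtain rfl := Option.some.inj heq
            refine ⟨s', hL, rfl, σ ++ [b], steps_append hsteps (.vis hL (.refl _)), ?_⟩
            rw [hX', Sset_snoc_congr hXσ'.symm b]
    · -- L simulates into Una
      intro a s' htr
      match a with
      | none =>
          refine ⟨(s', L.Sset σ), Or.inl ⟨htr, rfl⟩, rfl, σ, ?_, rfl⟩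
          simpa using steps_append hsteps (.tau htr (.refl _))
      | some b =>
          have hb : b ∈ L.alpha := L.wf _ _ _ htr
          have hst' : L.Steps L.init (σ ++ [b]) s' :=
            steps_append hsteps (.vis htr (.refl _))
          refine ⟨(s', L.Sset (σ ++ [b])),
            Or.inr (Or.inr ⟨hb, hb, htr, b, σ, rfl, ⟨s', hst'⟩, rfl, rfl⟩),
            rfl, σ ++ [b], hst', rfl⟩

end LTS
end

section
/- For every LTS L, Tr(L) = Div(L) ∪ Sf^Tr(L), where Sf^Tr(L) = { σ | (σ, ∅) ∈ Sf(L) }. -/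
namespace LTS

variable {S S₁ S₂ S₃ A : Type*}

private lemma steps_trans_nil {L : LTS S A} {s t u : S} {σ : List A}
    (h : L.Steps s σ t) (h' : L.Steps t [] u) : L.Steps s σ u := by
  induction h with
  | refl => exact h'
  | tau htr _ ih => exact Steps.tau htr (ih h')
  | vis htr _ ih => exact Steps.vis htr (ih h')

open Classical in
private lemma diverges_of_no_stable {L : LTS S A} {s : S}
    (h : ∀ t, L.Steps s [] t → ∃ t', L.tr t none t') : L.DivergesFrom s := by
  let F : {t // L.Steps s [] t} → {t // L.Steps s [] t} := fun t =>
    ⟨choose (h t.1 t.2), steps_trans_nil t.2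
      (Steps.tau (choose_spec (h t.1 t.2)) (Steps.refl _))⟩
  let g : ℕ → {t // L.Steps s [] t} := fun n => F^[n] ⟨s, Steps.refl s⟩
  refine ⟨fun n => (g n).1, rfl, fun n => ?_⟩
  have : g (n + 1) = F (g n) := Function.iterate_succ_apply' F n _
  show L.tr (g n).1 none (g (n+1)).1
  rw [this]
  exact choose_spec (h (g n).1 (g n).2)

/-- `Tr(L) = Div(L) ∪ Sf^Tr(L)`. -/
theorem tr_eq_div_union_sfTr (L : LTS S A) : L.Tr = L.Div ∪ L.SfTr := by
  ext σ
  constructor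
  · rintro ⟨s, hs⟩
    by_cases hst : ∃ t, L.Steps s [] t ∧ ∀ t', ¬ L.tr t none t'
    · obtain ⟨t, ht, hstab⟩ := hst
      exact Or.inr ⟨t, steps_trans_nil hs ht, hstab, fun a ha => absurd ha (by simp)⟩
    · push_neg at hst
      exact Or.inl ⟨s, hs, diverges_of_no_stable hst⟩
  · rintro (⟨s, hs, -⟩ | ⟨s, hs, -⟩) <;> exact ⟨s, hs⟩

end LTS
end

section
/- Bisimilar LTSs have the same divergence traces: if L₁ ≡ L₂ then Div(L₁) = Div(L₂). -/
namespace LTS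

variable {S S₁ S₂ S₃ A : Type*}

private lemma steps_sim {L₁ : LTS S₁ A} {L₂ : LTS S₂ A} {R : S₁ → S₂ → Prop}
    (hR : ∀ s₁ s₂, R s₁ s₂ →
      (∀ a s₁', L₁.tr s₁ a s₁' → ∃ s₂', L₂.tr s₂ a s₂' ∧ R s₁' s₂') ∧
      (∀ a s₂', L₂.tr s₂ a s₂' → ∃ s₁', L₁.tr s₁ a s₁' ∧ R s₁' s₂'))
    {s₁ t₁ : S₁} {σ : List A} (h : L₁.Steps s₁ σ t₁) :
    ∀ s₂, R s₁ s₂ → ∃ t₂, L₂.Steps s₂ σ t₂ ∧ R t₁ t₂ := by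
  induction h with
  | refl s => exact fun s₂ hr => ⟨s₂, Steps.refl _, hr⟩
  | tau htr _ ih =>
    intro s₂ hr
    obtain ⟨s₂', htr', hr'⟩ := (hR _ _ hr).1 _ _ htr
    obtain ⟨t₂, hst, hrt⟩ := ih _ hr'
    exact ⟨t₂, Steps.tau htr' hst, hrt⟩
  | vis htr _ ih =>
    intro s₂ hr
    obtain ⟨s₂', htr', hr'⟩ := (hR _ _ hr).1 _ _ htr
    obtain ⟨t₂, hst, hrt⟩ := ih _ hr'
    exact ⟨t₂, Steps.vis htr' hst, hrt⟩

private lemma div_sim {L₁ : LTS S₁ A} {L₂ : LTS S₂ A} {R : S₁ → S₂ → Prop}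
    (hR : ∀ s₁ s₂, R s₁ s₂ →
      (∀ a s₁', L₁.tr s₁ a s₁' → ∃ s₂', L₂.tr s₂ a s₂' ∧ R s₁' s₂') ∧
      (∀ a s₂', L₂.tr s₂ a s₂' → ∃ s₁', L₁.tr s₁ a s₁' ∧ R s₁' s₂'))
    {s₁ : S₁} {s₂ : S₂} (hr : R s₁ s₂) (hd : L₁.DivergesFrom s₁) :
    L₂.DivergesFrom s₂ := by
  obtain ⟨f, hf0, hf⟩ := hd
  choose next htr hrn using
    fun n (t : S₂) (h : R (f n) t) => (hR _ _ h).1 none (f (n + 1)) (hf n)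
  let g : ∀ n, {t : S₂ // R (f n) t} :=
    fun n => Nat.rec ⟨s₂, by rw [hf0]; exact hr⟩
      (fun n p => ⟨next n p.1 p.2, hrn n p.1 p.2⟩) n
  exact ⟨fun n => (g n).1, rfl, fun n => htr n (g n).1 (g n).2⟩

/-- bisimilar LTSs have the same divergence traces. -/
theorem bisimilar_div_eq (L₁ : LTS S₁ A) (L₂ : LTS S₂ A) (h : Bisimilar L₁ L₂) :
    L₁.Div = L₂.Div := by
  obtain ⟨-, R, hinit, hR⟩ := h
  have hR' : ∀ s₂ s₁, (fun a b => R b a) s₂ s₁ →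
      (∀ a s₂', L₂.tr s₂ a s₂' → ∃ s₁', L₁.tr s₁ a s₁' ∧ R s₁' s₂') ∧
      (∀ a s₁', L₁.tr s₁ a s₁' → ∃ s₂', L₂.tr s₂ a s₂' ∧ R s₁' s₂') :=
    fun s₂ s₁ hr => ⟨(hR _ _ hr).2, (hR _ _ hr).1⟩
  ext σ
  constructor
  · rintro ⟨s, hsteps, hdiv⟩
    obtain ⟨t, hsteps', hrt⟩ := steps_sim hR hsteps _ hinit
    exact ⟨t, hsteps', div_sim hR hrt hdiv⟩
  · rintro ⟨s, hsteps, hdiv⟩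
    obtain ⟨t, hsteps', hrt⟩ := steps_sim hR' hsteps _ hinit
    exact ⟨t, hsteps', div_sim hR' hrt hdiv⟩

end LTS
end

section
/- For the internal choice operator, the CFFD semantic sets are componentwise unions: Σ(L ⊓ L′) = Σ(L) ∪ Σ(L′), Sf(L ⊓ L′) = Sf(L) ∪ Sf(L′), Div(L ⊓ L′) = Div(L) ∪ Div(L′), and Inf(L ⊓ L′) = Inf(L) ∪ Inf(L′). -/
namespace LTS

variable {S S₁ S₂ S₃ A : Type*}

section IChoiceAux

variable {L₁ : LTS S₁ A} {L₂ : LTS S₂ A}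

lemma ichoice_tr_inl {s : S₁} {a : Option A} {x : Option (S₁ ⊕ S₂)} :
    (ichoice L₁ L₂).tr (some (Sum.inl s)) a x ↔
      ∃ t, x = some (Sum.inl t) ∧ L₁.tr s a t := by
  constructor
  · rintro (⟨h, -⟩ | ⟨s₁, t₁, hs, ht, h⟩ | ⟨s₂, t₂, hs, -⟩)
    · simp at h
    · obtain rfl : s = s₁ := by simpa using hs
      exact ⟨t₁, ht, h⟩
    · simp at hs
  · rintro ⟨t, rfl, h⟩
    exact Or.inr (Or.inl ⟨s, t, rfl, rfl, h⟩)

lemma ichoice_tr_inr {s : S₂} {a : Option A} {x : Option (S₁ ⊕ S₂)} :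
    (ichoice L₁ L₂).tr (some (Sum.inr s)) a x ↔
      ∃ t, x = some (Sum.inr t) ∧ L₂.tr s a t := by
  constructor
  · rintro (⟨h, -⟩ | ⟨s₁, t₁, hs, -⟩ | ⟨s₂, t₂, hs, ht, h⟩)
    · simp at h
    · simp at hs
    · obtain rfl : s = s₂ := by simpa using hs
      exact ⟨t₂, ht, h⟩
  · rintro ⟨t, rfl, h⟩
    exact Or.inr (Or.inr ⟨s, t, rfl, rfl, h⟩)

lemma ichoice_steps_inl {s t : S₁} {σ : List A} (h : L₁.Steps s σ t) :
    (ichoice L₁ L₂).Steps (some (Sum.inl s)) σ (some (Sum.inl t)) := by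
  induction h with
  | refl => exact Steps.refl _
  | tau htr _ ih => exact Steps.tau (ichoice_tr_inl.2 ⟨_, rfl, htr⟩) ih
  | vis htr _ ih => exact Steps.vis (ichoice_tr_inl.2 ⟨_, rfl, htr⟩) ih

lemma ichoice_steps_inr {s t : S₂} {σ : List A} (h : L₂.Steps s σ t) :
    (ichoice L₁ L₂).Steps (some (Sum.inr s)) σ (some (Sum.inr t)) := by
  induction h with
  | refl => exact Steps.refl _
  | tau htr _ ih => exact Steps.tau (ichoice_tr_inr.2 ⟨_, rfl, htr⟩) ih
  | vis htr _ ih => exact Steps.vis (ichoice_tr_inr.2 ⟨_, rfl, htr⟩) ih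

lemma ichoice_steps_inl_inv {s : S₁} {σ : List A} {x : Option (S₁ ⊕ S₂)}
    (h : (ichoice L₁ L₂).Steps (some (Sum.inl s)) σ x) :
    ∃ t, x = some (Sum.inl t) ∧ L₁.Steps s σ t := by
  generalize hy : (some (Sum.inl s) : Option (S₁ ⊕ S₂)) = y at h
  induction h generalizing s with
  | refl => exact ⟨s, hy.symm, Steps.refl _⟩
  | tau htr _ ih =>
      subst hy
      obtain ⟨u, rfl, htr'⟩ := ichoice_tr_inl.1 htr
      obtain ⟨t, hx, hst⟩ := ih rfl
      exact ⟨t, hx, Steps.tau htr' hst⟩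
  | vis htr _ ih =>
      subst hy
      obtain ⟨u, rfl, htr'⟩ := ichoice_tr_inl.1 htr
      obtain ⟨t, hx, hst⟩ := ih rfl
      exact ⟨t, hx, Steps.vis htr' hst⟩

lemma ichoice_steps_inr_inv {s : S₂} {σ : List A} {x : Option (S₁ ⊕ S₂)}
    (h : (ichoice L₁ L₂).Steps (some (Sum.inr s)) σ x) :
    ∃ t, x = some (Sum.inr t) ∧ L₂.Steps s σ t := by
  generalize hy : (some (Sum.inr s) : Option (S₁ ⊕ S₂)) = y at h
  induction h generalizing s with
  | refl => exact ⟨s, hy.symm, Steps.refl _⟩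
  | tau htr _ ih =>
      subst hy
      obtain ⟨u, rfl, htr'⟩ := ichoice_tr_inr.1 htr
      obtain ⟨t, hx, hst⟩ := ih rfl
      exact ⟨t, hx, Steps.tau htr' hst⟩
  | vis htr _ ih =>
      subst hy
      obtain ⟨u, rfl, htr'⟩ := ichoice_tr_inr.1 htr
      obtain ⟨t, hx, hst⟩ := ih rfl
      exact ⟨t, hx, Steps.vis htr' hst⟩

lemma ichoice_steps_none_inv {σ : List A} {x : Option (S₁ ⊕ S₂)}
    (h : (ichoice L₁ L₂).Steps none σ x) :
    (σ = [] ∧ x = none) ∨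
    (∃ t, x = some (Sum.inl t) ∧ L₁.Steps L₁.init σ t) ∨
    (∃ t, x = some (Sum.inr t) ∧ L₂.Steps L₂.init σ t) := by
  cases h with
  | refl => exact Or.inl ⟨rfl, rfl⟩
  | tau htr h' =>
      rcases htr with ⟨-, -, (rfl | rfl)⟩ | ⟨s₁, t₁, hs, -⟩ | ⟨s₂, t₂, hs, -⟩
      · exact Or.inr (Or.inl (ichoice_steps_inl_inv h'))
      · exact Or.inr (Or.inr (ichoice_steps_inr_inv h'))
      · simp at hs
      · simp at hs
  | vis htr h' =>
      rcases htr with ⟨-, ha, -⟩ | ⟨s₁, t₁, hs, -⟩ | ⟨s₂, t₂, hs, -⟩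
      · simp at ha
      · simp at hs
      · simp at hs

lemma ichoice_refuses_inl {t : S₁} {X : Set A} :
    (ichoice L₁ L₂).Refuses (some (Sum.inl t)) X ↔ L₁.Refuses t X := by
  constructor
  · rintro ⟨h1, h2⟩
    refine ⟨fun u hu => h1 _ (ichoice_tr_inl.2 ⟨u, rfl, hu⟩),
      fun a ha u hu => h2 a ha _ (ichoice_tr_inl.2 ⟨u, rfl, hu⟩)⟩
  · rintro ⟨h1, h2⟩
    constructor
    · rintro s' hs'
      obtain ⟨u, -, hu⟩ := ichoice_tr_inl.1 hs'
      exact h1 u hu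
    · rintro a ha s' hs'
      obtain ⟨u, -, hu⟩ := ichoice_tr_inl.1 hs'
      exact h2 a ha u hu

lemma ichoice_refuses_inr {t : S₂} {X : Set A} :
    (ichoice L₁ L₂).Refuses (some (Sum.inr t)) X ↔ L₂.Refuses t X := by
  constructor
  · rintro ⟨h1, h2⟩
    refine ⟨fun u hu => h1 _ (ichoice_tr_inr.2 ⟨u, rfl, hu⟩),
      fun a ha u hu => h2 a ha _ (ichoice_tr_inr.2 ⟨u, rfl, hu⟩)⟩
  · rintro ⟨h1, h2⟩
    constructor
    · rintro s' hs'
      obtain ⟨u, -, hu⟩ := ichoice_tr_inr.1 hs'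
      exact h1 u hu
    · rintro a ha s' hs'
      obtain ⟨u, -, hu⟩ := ichoice_tr_inr.1 hs'
      exact h2 a ha u hu

lemma ichoice_div_inl {t : S₁}
    (h : (ichoice L₁ L₂).DivergesFrom (some (Sum.inl t))) :
    L₁.DivergesFrom t := by
  obtain ⟨f, hf0, hf⟩ := h
  have key : ∀ n, ∃ u, f n = some (Sum.inl u) := by
    intro n
    induction n with
    | zero => exact ⟨t, hf0⟩
    | succ n ih =>
        obtain ⟨u, hu⟩ := ih
        have h' := hf n
        rw [hu] at h'
        obtain ⟨v, hv, -⟩ := ichoice_tr_inl.1 h'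
        exact ⟨v, hv⟩
  choose g hg using key
  have hg0 : g 0 = t := by
    have := hg 0; rw [hf0] at this; simpa using this.symm
  refine ⟨g, hg0, fun n => ?_⟩
  have h' := hf n
  rw [hg n] at h'
  obtain ⟨v, hv, htr⟩ := ichoice_tr_inl.1 h'
  rw [hg (n + 1)] at hv
  obtain rfl : v = g (n + 1) := by simpa using hv.symm
  exact htr

lemma ichoice_div_inr {t : S₂}
    (h : (ichoice L₁ L₂).DivergesFrom (some (Sum.inr t))) :
    L₂.DivergesFrom t := by
  obtain ⟨f, hf0, hf⟩ := h
  have key : ∀ n, ∃ u, f n = some (Sum.inr u) := by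
    intro n
    induction n with
    | zero => exact ⟨t, hf0⟩
    | succ n ih =>
        obtain ⟨u, hu⟩ := ih
        have h' := hf n
        rw [hu] at h'
        obtain ⟨v, hv, -⟩ := ichoice_tr_inr.1 h'
        exact ⟨v, hv⟩
  choose g hg using key
  have hg0 : g 0 = t := by
    have := hg 0; rw [hf0] at this; simpa using this.symm
  refine ⟨g, hg0, fun n => ?_⟩
  have h' := hf n
  rw [hg n] at h'
  obtain ⟨v, hv, htr⟩ := ichoice_tr_inr.1 h'
  rw [hg (n + 1)] at hv
  obtain rfl : v = g (n + 1) := by simpa using hv.symm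
  exact htr

end IChoiceAux

/-- the CFFD semantics of internal choice is the componentwise union. -/
theorem ichoice_cffd (L₁ : LTS S₁ A) (L₂ : LTS S₂ A) :
    (ichoice L₁ L₂).alpha = L₁.alpha ∪ L₂.alpha ∧
    (ichoice L₁ L₂).Sf = L₁.Sf ∪ L₂.Sf ∧
    (ichoice L₁ L₂).Div = L₁.Div ∪ L₂.Div ∧
    (ichoice L₁ L₂).Inf = L₁.Inf ∪ L₂.Inf := by
  refine ⟨rfl, ?_, ?_, ?_⟩
  · ext ⟨σ, X⟩
    constructor
    · rintro ⟨s, hst, href⟩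
      rcases ichoice_steps_none_inv hst with ⟨rfl, rfl⟩ | ⟨t, rfl, hst'⟩ | ⟨t, rfl, hst'⟩
      · exact absurd (Or.inl ⟨rfl, rfl, Or.inl rfl⟩) (href.1 (some (Sum.inl L₁.init)))
      · exact Or.inl ⟨t, hst', ichoice_refuses_inl.1 href⟩
      · exact Or.inr ⟨t, hst', ichoice_refuses_inr.1 href⟩
    · rintro (⟨t, hst, href⟩ | ⟨t, hst, href⟩)
      · exact ⟨some (Sum.inl t),
          Steps.tau (Or.inl ⟨rfl, rfl, Or.inl rfl⟩) (ichoice_steps_inl hst),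
          ichoice_refuses_inl.2 href⟩
      · exact ⟨some (Sum.inr t),
          Steps.tau (Or.inl ⟨rfl, rfl, Or.inr rfl⟩) (ichoice_steps_inr hst),
          ichoice_refuses_inr.2 href⟩
  · ext σ
    constructor
    · rintro ⟨s, hst, hdiv⟩
      rcases ichoice_steps_none_inv hst with ⟨rfl, rfl⟩ | ⟨t, rfl, hst'⟩ | ⟨t, rfl, hst'⟩
      · obtain ⟨f, hf0, hf⟩ := hdiv
        have h1 := hf 0
        rw [hf0] at h1
        rcases h1 with ⟨-, -, (h | h)⟩ | ⟨s₁, t₁, hs, -⟩ | ⟨s₂, t₂, hs, -⟩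
        · refine Or.inl ⟨L₁.init, Steps.refl _,
            ichoice_div_inl (L₂ := L₂) ⟨fun n => f (n + 1), h ▸ rfl, fun n => hf (n + 1)⟩⟩
        · refine Or.inr ⟨L₂.init, Steps.refl _,
            ichoice_div_inr (L₁ := L₁) ⟨fun n => f (n + 1), h ▸ rfl, fun n => hf (n + 1)⟩⟩
        · simp at hs
        · simp at hs
      · exact Or.inl ⟨t, hst', ichoice_div_inl hdiv⟩
      · exact Or.inr ⟨t, hst', ichoice_div_inr hdiv⟩
    · rintro (⟨t, hst, ⟨g, hg0, hg⟩⟩ | ⟨t, hst, ⟨g, hg0, hg⟩⟩)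
      · exact ⟨some (Sum.inl t),
          Steps.tau (Or.inl ⟨rfl, rfl, Or.inl rfl⟩) (ichoice_steps_inl hst),
          fun n => some (Sum.inl (g n)), by simp [hg0],
          fun n => ichoice_tr_inl.2 ⟨g (n + 1), rfl, hg n⟩⟩
      · exact ⟨some (Sum.inr t),
          Steps.tau (Or.inl ⟨rfl, rfl, Or.inr rfl⟩) (ichoice_steps_inr hst),
          fun n => some (Sum.inr (g n)), by simp [hg0],
          fun n => ichoice_tr_inr.2 ⟨g (n + 1), rfl, hg n⟩⟩
  · ext ξ
    constructor
    · rintro ⟨g, hg0, hg⟩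
      have h1 := hg 0
      rw [hg0] at h1
      rcases ichoice_steps_none_inv h1 with ⟨h, -⟩ | ⟨t, ht, hst⟩ | ⟨t, ht, hst⟩
      · simp at h
      · left
        have key : ∀ n, ∃ u, g (n + 1) = some (Sum.inl u) := by
          intro n
          induction n with
          | zero => exact ⟨t, ht⟩
          | succ n ih =>
              obtain ⟨u, hu⟩ := ih
              have h' := hg (n + 1)
              rw [hu] at h'
              obtain ⟨v, hv, -⟩ := ichoice_steps_inl_inv h'
              exact ⟨v, hv⟩
        choose f hf using key
        refine ⟨fun n => Nat.rec L₁.init (fun m _ => f m) n, rfl, fun n => ?_⟩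
        cases n with
        | zero =>
            obtain rfl : t = f 0 := by
              have := hf 0; rw [ht] at this; simpa using this
            exact hst
        | succ n =>
            have h' := hg (n + 1)
            rw [hf n] at h'
            obtain ⟨v, hv, hst'⟩ := ichoice_steps_inl_inv h'
            rw [hf (n + 1)] at hv
            obtain rfl : v = f (n + 1) := by simpa using hv.symm
            exact hst'
      · right
        have key : ∀ n, ∃ u, g (n + 1) = some (Sum.inr u) := by
          intro n
          induction n with
          | zero => exact ⟨t, ht⟩
          | succ n ih =>
              obtain ⟨u, hu⟩ := ih
              have h' := hg (n + 1)
              rw [hu] at h'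
              obtain ⟨v, hv, -⟩ := ichoice_steps_inr_inv h'
              exact ⟨v, hv⟩
        choose f hf using key
        refine ⟨fun n => Nat.rec L₂.init (fun m _ => f m) n, rfl, fun n => ?_⟩
        cases n with
        | zero =>
            obtain rfl : t = f 0 := by
              have := hf 0; rw [ht] at this; simpa using this
            exact hst
        | succ n =>
            have h' := hg (n + 1)
            rw [hf n] at h'
            obtain ⟨v, hv, hst'⟩ := ichoice_steps_inr_inv h'
            rw [hf (n + 1)] at hv
            obtain rfl : v = f (n + 1) := by simpa using hv.symm
            exact hst'
    · rintro (⟨g, hg0, hg⟩ | ⟨g, hg0, hg⟩)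
      · refine ⟨fun n => Nat.rec none (fun m _ => some (Sum.inl (g (m + 1)))) n, rfl,
          fun n => ?_⟩
        cases n with
        | zero =>
            exact Steps.tau (Or.inl ⟨rfl, rfl, Or.inl rfl⟩)
              (ichoice_steps_inl (hg0 ▸ hg 0))
        | succ n => exact ichoice_steps_inl (hg (n + 1))
      · refine ⟨fun n => Nat.rec none (fun m _ => some (Sum.inr (g (m + 1)))) n, rfl,
          fun n => ?_⟩
        cases n with
        | zero =>
            exact Steps.tau (Or.inl ⟨rfl, rfl, Or.inr rfl⟩)
              (ichoice_steps_inr (hg0 ▸ hg 0))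
        | succ n => exact ichoice_steps_inr (hg (n + 1))

end LTS
end

section
/- For every LTS L the chain of inclusions anI(L) ⊆ eanI(L) ⊆ aenI(L) ⊆ Inf(L) holds. -/
namespace LTS

variable {S S₁ S₂ S₃ A : Type*}

/-- `anI(L) ⊆ eanI(L) ⊆ aenI(L) ⊆ Inf(L)`. -/
theorem inf_trace_chain (L : LTS S A) :
    L.anI ⊆ L.eanI ∧ L.eanI ⊆ L.aenI ∧ L.aenI ⊆ L.Inf := by
  classical
  have pref_take : ∀ (ξ : ℕ → A) (j i : ℕ), j ≤ i → (pref ξ i).take j = pref ξ j := by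
    intro ξ j i hji
    simp [pref, ← List.map_take, List.take_range, Nat.min_eq_left hji]
  have pref_len : ∀ (ξ : ℕ → A) (i : ℕ), (pref ξ i).length = i := by
    intro ξ i; simp [pref]
  refine ⟨?_, ?_, ?_⟩
  · rintro ξ ⟨hInf, hext⟩
    refine ⟨hInf, 0, fun i _ hdiv => ?_⟩
    apply hext
    have halpha : ∀ k, ξ k ∈ L.alpha := by
      obtain ⟨g, -, hstep⟩ := hInf
      intro k
      exact mem_alpha_of_steps (hstep k) _ (by simp)
    have hex : ∃ i, pref ξ i ∈ L.Div := ⟨i, hdiv⟩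
    refine ⟨halpha, Nat.find hex, Nat.find_spec hex, ?_⟩
    intro k hk
    rw [pref_len] at hk
    rw [pref_take ξ k _ hk.le]
    exact Nat.find_min hex hk
  · rintro ξ ⟨hInf, n, hn⟩
    refine ⟨hInf, fun m => ⟨max m n, le_max_left _ _, hn _ (le_max_right _ _)⟩⟩
  · rintro ξ ⟨hInf, -⟩
    exact hInf

end LTS
end

section
/- For every LTS L and every word σ over its alphabet, σ ∈ Tr(L) if and only if σ ∈ Div(L || LL), where LL is the one-state LTS with empty alphabet and a single τ-loop on its (initial) state. Consequently, any equivalence preserved under parallel composition that preserves Div also preserves Tr. -/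
namespace LTS

variable {S S₁ S₂ S₃ A : Type*}

lemma steps_lift_LL {L : LTS S₁ A} {s t : S₁} {σ : List A}
    (h : L.Steps s σ t) :
    (L.par (LL A)).Steps (s, ()) σ (t, ()) := by
  induction h with
  | refl => exact Steps.refl _
  | tau htr _ ih => exact Steps.tau (s' := (_, ())) (Or.inl ⟨htr, rfl⟩) ih
  | vis htr _ ih =>
      exact Steps.vis (s' := (_, ())) (Or.inl ⟨by simp [LL], htr, rfl⟩) ih

lemma steps_proj_LL {L : LTS S₁ A} {p q : S₁ × Unit} {σ : List A}
    (h : (L.par (LL A)).Steps p σ q) : L.Steps p.1 σ q.1 := by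
  induction h with
  | refl => exact Steps.refl _
  | tau htr _ ih =>
      rcases htr with ⟨h1, -⟩ | ⟨-, h2⟩
      · exact Steps.tau h1 ih
      · rwa [h2] at ih
  | vis htr _ ih =>
      rcases htr with ⟨-, h1, -⟩ | ⟨-, h2, -⟩ | ⟨-, -, h1, -⟩
      · exact Steps.vis h1 ih
      · simp [LL] at h2
      · exact Steps.vis h1 ih

lemma divergesFrom_par_LL (L : LTS S₁ A) (p : S₁ × Unit) :
    (L.par (LL A)).DivergesFrom p := by
  exact ⟨fun _ => p, rfl, fun n => Or.inr ⟨rfl, rfl⟩⟩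

lemma tr_eq_div_par_LL_mem (L : LTS S₁ A) (σ : List A) :
    σ ∈ L.Tr ↔ σ ∈ (L.par (LL A)).Div := by
  constructor
  · rintro ⟨s, hs⟩
    exact ⟨(s, ()), steps_lift_LL hs, divergesFrom_par_LL L _⟩
  · rintro ⟨s, hs, -⟩
    exact ⟨s.1, steps_proj_LL hs⟩

/-- for every word `σ` over the alphabet of `L`,
`σ ∈ Tr(L) ↔ σ ∈ Div(L || LL)`; consequently, agreement on `Div(· || LL)`
implies agreement on traces. -/
theorem tr_iff_div_par_LL (L : LTS S₁ A) (L' : LTS S₂ A) :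
    (∀ σ : List A, (∀ a ∈ σ, a ∈ L.alpha) →
      (σ ∈ L.Tr ↔ σ ∈ (L.par (LL A)).Div)) ∧
    ((L.par (LL A)).Div = (L'.par (LL A)).Div → L.Tr = L'.Tr) := by
  refine ⟨fun σ _ => tr_eq_div_par_LL_mem L σ, fun h => ?_⟩
  ext σ
  rw [tr_eq_div_par_LL_mem L σ, tr_eq_div_par_LL_mem L' σ, h]

end LTS
end

section
/- In PD(L): the LTS PD(L) is bisimilar to L; every trace leading to a pre-divergent state of PD(L) belongs to anT(L); and no trace leading to a post-divergent state of PD(L) belongs to anT(L). -/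
namespace LTS

variable {S S₁ S₂ S₃ A : Type*}

/-! A state of `PD(L)` reached along `σ` has `Det`-component `S_σ` and tag `[σ]`. Since
`σa ∈ anT(L)` iff `σ ∈ anT(L)`, `σa ∈ Tr(L)` and `σa ∉ Div(L)`, and the last two depend only on
`S_σa`, the tag of a successor does not depend on which trace witnesses the source state. Hence
the tag of every reachable state is the tag of any trace leading to it, and projecting onto the
`L`-component is a bisimulation. -/

section

variable {L : LTS S A}

theorem Steps.append {s t u : S} {σ ρ : List A}
    (h₁ : L.Steps s σ t) (h₂ : L.Steps t ρ u) : L.Steps s (σ ++ ρ) u := by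
  induction h₁ with
  | refl => exact h₂
  | tau htr _ ih => exact .tau htr (ih h₂)
  | vis htr _ ih => exact .vis htr (ih h₂)

theorem Steps.snoc {s t u : S} {σ : List A} {a : Option A}
    (h : L.Steps s σ t) (htr : L.tr t a u) : L.Steps s (extw σ a) u := by
  cases a with
  | none => simpa [extw] using h.append (.tau htr (.refl u))
  | some b => exact h.append (.vis htr (.refl u))

theorem Steps.exists_of_append {s u : S} {σ ρ : List A}
    (h : L.Steps s (σ ++ ρ) u) : ∃ t, L.Steps s σ t ∧ L.Steps t ρ u := by
  generalize hτ : σ ++ ρ = τ at h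
  induction h generalizing σ with
  | refl s =>
    obtain ⟨rfl, rfl⟩ := List.append_eq_nil_iff.mp hτ
    exact ⟨s, .refl s, .refl s⟩
  | tau htr _ ih =>
    obtain ⟨t, h₁, h₂⟩ := ih hτ
    exact ⟨t, .tau htr h₁, h₂⟩
  | @vis s s' _ a τ htr hst ih =>
    cases σ with
    | nil =>
      rw [List.nil_append] at hτ
      exact ⟨s, .refl s, hτ ▸ .vis htr hst⟩
    | cons b σ =>
      simp only [List.cons_append, List.cons.injEq] at hτ
      obtain ⟨rfl, hτ⟩ := hτ
      obtain ⟨t, h₁, h₂⟩ := ih hτ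
      exact ⟨t, .vis htr h₁, h₂⟩

theorem mem_Tr_of_prefix {σ ρ : List A} (hσ : σ ∈ L.Tr) (hρ : ρ <+: σ) :
    ρ ∈ L.Tr := by
  obtain ⟨ρ', rfl⟩ := hρ
  obtain ⟨s, hs⟩ := hσ
  obtain ⟨t, ht, -⟩ := hs.exists_of_append
  exact ⟨t, ht⟩

theorem mem_sset_append {σ ρ : List A} {u : S} :
    u ∈ L.Sset (σ ++ ρ) ↔ ∃ t ∈ L.Sset σ, L.Steps t ρ u :=
  ⟨Steps.exists_of_append, fun ⟨_, ht, htu⟩ => ht.append htu⟩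

theorem sset_extw_congr {σ σ' : List A} (h : L.Sset σ = L.Sset σ')
    (a : Option A) : L.Sset (extw σ a) = L.Sset (extw σ' a) := by
  cases a with
  | none => exact h
  | some b => ext u; simp only [extw, mem_sset_append, h]

theorem mem_Tr_congr {σ σ' : List A} (h : L.Sset σ = L.Sset σ') :
    σ ∈ L.Tr ↔ σ' ∈ L.Tr :=
  exists_congr fun s => Set.ext_iff.mp h s

theorem mem_Div_congr {σ σ' : List A} (h : L.Sset σ = L.Sset σ') :
    σ ∈ L.Div ↔ σ' ∈ L.Div :=
  exists_congr fun s => and_congr_left' (Set.ext_iff.mp h s)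

theorem mem_anT_iff {σ : List A} :
    σ ∈ L.anT ↔ σ ∈ L.Tr ∧ ∀ ρ, ρ <+: σ → ρ ∉ L.Div := by
  classical
  constructor
  · rintro ⟨⟨s, hs⟩, hext⟩
    refine ⟨⟨s, hs⟩, fun ρ hρσ hρ => ?_⟩
    -- a shortest divergent prefix of `σ` is a minimal divergence trace
    have hex : ∃ n, ∃ ρ, ρ <+: σ ∧ ρ.length = n ∧ ρ ∈ L.Div := ⟨_, ρ, hρσ, rfl, hρ⟩
    obtain ⟨μ, hμσ, hμlen, hμ⟩ := Nat.find_spec hex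
    refine hext ⟨mem_alpha_of_steps hs, μ.length, hμσ.length_le, ?_⟩
    rw [← List.prefix_iff_eq_take.mp hμσ]
    refine ⟨hμ, fun k hk hk_div => Nat.find_min hex (hμlen ▸ hk)
      ⟨μ.take k, (List.take_prefix k μ).trans hμσ, ?_, hk_div⟩⟩
    simp only [List.length_take]
    omega
  · rintro ⟨htr, hpre⟩
    exact ⟨htr, fun ⟨_, i, _, hmin⟩ => hpre _ (List.take_prefix i σ) hmin.1⟩

theorem append_singleton_mem_anT_iff {σ : List A} {b : A} :
    σ ++ [b] ∈ L.anT ↔ σ ∈ L.anT ∧ σ ++ [b] ∈ L.Tr ∧ σ ++ [b] ∉ L.Div := by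
  simp only [mem_anT_iff, List.prefix_concat_iff, or_imp, forall_and, forall_eq]
  have hTr : σ ++ [b] ∈ L.Tr → σ ∈ L.Tr := fun h => mem_Tr_of_prefix h (List.prefix_append σ [b])
  tauto

theorem tag_eq_tag_iff {σ σ' : List A} :
    L.tag σ = L.tag σ' ↔ (σ ∈ L.anT ↔ σ' ∈ L.anT) :=
  decide_eq_decide

theorem tag_extw_congr {σ σ' : List A} (hS : L.Sset σ = L.Sset σ')
    (ht : L.tag σ = L.tag σ') (a : Option A) : L.tag (extw σ a) = L.tag (extw σ' a) := by
  cases a with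
  | none => exact ht
  | some b =>
    have hSb : L.Sset (σ ++ [b]) = L.Sset (σ' ++ [b]) := sset_extw_congr hS (some b)
    rw [tag_eq_tag_iff] at ht ⊢
    show σ ++ [b] ∈ L.anT ↔ σ' ++ [b] ∈ L.anT
    rw [append_singleton_mem_anT_iff, append_singleton_mem_anT_iff, ht, mem_Tr_congr hSb,
      mem_Div_congr hSb]

theorem det_tr_sset {σ : List A} {a : Option A} {Y : Set S}
    (h : L.Det.tr (L.Sset σ) a Y) : Y = L.Sset (extw σ a) := by
  obtain ⟨b, σ', rfl, -, hX, rfl⟩ := h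
  exact sset_extw_congr hX.symm (some b)

theorem una_tr_inv {σ : List A} {a : Option A} {p q : S × Set S}
    (hp : p.2 = L.Sset σ) (h : L.Una.tr p a q) :
    L.tr p.1 a q.1 ∧ q.2 = L.Sset (extw σ a) := by
  cases a with
  | none =>
    rcases h with ⟨htr, hq⟩ | ⟨htr, -⟩
    · exact ⟨htr, hq.trans hp⟩
    · obtain ⟨_, _, ⟨⟩, -⟩ := htr
  | some b =>
    rcases h with ⟨hb, htr, -⟩ | ⟨hb, htr, -⟩ | ⟨-, -, htr, hdet⟩
    · exact absurd (L.wf _ _ _ htr) hb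
    · exact absurd (L.Det.wf _ _ _ htr) hb
    · exact ⟨htr, det_tr_sset (hp ▸ hdet)⟩

theorem una_steps_inv {σ ρ : List A} {p q : S × Set S}
    (hp : p.2 = L.Sset σ) (h : L.Una.Steps p ρ q) :
    L.Steps p.1 ρ q.1 ∧ q.2 = L.Sset (σ ++ ρ) := by
  induction h generalizing σ with
  | refl => exact ⟨.refl _, by rwa [List.append_nil]⟩
  | tau htr _ ih =>
    obtain ⟨htr, hp'⟩ := una_tr_inv hp htr
    obtain ⟨hsteps, hq⟩ := ih hp'
    exact ⟨.tau htr hsteps, hq⟩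
  | vis htr _ ih =>
    obtain ⟨htr, hp'⟩ := una_tr_inv hp htr
    obtain ⟨hsteps, hq⟩ := ih hp'
    exact ⟨.vis htr hsteps, by simpa [extw] using hq⟩

theorem una_steps_init {σ : List A} {p : S × Set S}
    (h : L.Una.Steps L.Una.init σ p) : L.Steps L.init σ p.1 ∧ p.2 = L.Sset σ := by
  have := una_steps_inv (σ := []) rfl h
  rwa [List.nil_append] at this

theorem una_tr_of_tr {σ : List A} {a : Option A} {p : S × Set S} {s' : S}
    (hp : L.Una.Steps L.Una.init σ p) (h : L.tr p.1 a s') :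
    L.Una.tr p a (s', L.Sset (extw σ a)) := by
  obtain ⟨hsteps, hp2⟩ := una_steps_init hp
  cases a with
  | none => exact .inl ⟨h, hp2.symm⟩
  | some b =>
    have hb : b ∈ L.alpha := L.wf _ _ _ h
    exact .inr (.inr ⟨hb, hb, h, b, σ, rfl, ⟨s', hsteps.snoc h⟩, hp2, rfl⟩)

def PDReached (L : LTS S A) (σ : List A) (p : (S × Set S) × Bool) : Prop :=
  L.Una.Steps L.Una.init σ p.1 ∧ p.2 = L.tag σ

theorem PDReached.tr {σ : List A} {a : Option A} {p q : (S × Set S) × Bool}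
    (hp : L.PDReached σ p) (h : L.PD.tr p a q) : L.PDReached (extw σ a) q := by
  obtain ⟨σ', hσ', hp2, hq2, htr⟩ := h
  refine ⟨hp.1.snoc htr, hq2.trans (tag_extw_congr ?_ (hp2.symm.trans hp.2) a)⟩
  exact (una_steps_init hσ').2.symm.trans (una_steps_init hp.1).2

theorem PDReached.steps {σ ρ : List A} {p q : (S × Set S) × Bool}
    (hp : L.PDReached σ p) (h : L.PD.Steps p ρ q) : L.PDReached (σ ++ ρ) q := by
  induction h generalizing σ with
  | refl => simpa using hp
  | tau htr _ ih => exact ih (hp.tr htr)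
  | vis htr _ ih => simpa [extw] using ih (hp.tr htr)

theorem pdReached_of_steps {σ : List A} {p : (S × Set S) × Bool}
    (h : L.PD.Steps L.PD.init σ p) : L.PDReached σ p := by
  simpa using PDReached.steps (σ := []) ⟨.refl _, rfl⟩ h

end

theorem bisimilar_PD (L : LTS S A) : Bisimilar L.PD L := by
  refine ⟨rfl, fun p s => ∃ σ, L.PDReached σ p ∧ p.1.1 = s, ⟨[], ⟨.refl _, rfl⟩, rfl⟩, ?_⟩
  rintro p _ ⟨σ, hp, rfl⟩
  constructor
  · rintro a q hpq
    have ⟨σ', hσ', _, _, htr⟩ := hpq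
    exact ⟨q.1.1, (una_tr_inv (una_steps_init hσ').2 htr).1, _, hp.tr hpq, rfl⟩
  · intro a s' htr
    have hpq : L.PD.tr p a ((s', L.Sset (extw σ a)), L.tag (extw σ a)) :=
      ⟨σ, hp.1, hp.2, rfl, una_tr_of_tr hp.1 htr⟩
    exact ⟨_, hpq, _, hp.tr hpq, rfl⟩

/-- `PD(L)` is bisimilar to `L`; every trace leading to a
pre-divergent state of `PD(L)` is in `anT(L)`, and no trace leading to a
post-divergent state is. -/
theorem pd_properties (L : LTS S A) :
    Bisimilar L.PD L ∧
    ∀ (p : (S × Set S) × Bool) (σ : List A),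
      L.PD.Steps L.PD.init σ p →
        ((p.2 = true → σ ∈ L.anT) ∧ (p.2 = false → σ ∉ L.anT)) := by
  refine ⟨bisimilar_PD L, fun p σ h => ?_⟩
  have htag : p.2 = L.tag σ := (pdReached_of_steps h).2
  simp [htag, tag]

end LTS
end
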